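/- arXiv:2112.12171 — 4 statements merged into one kernel-verified Lean document; each statement's English description precedes it below -/
import Mathlib

section
/- If the smoothing function f̂(ε,x) is built from the nested plus-function representation of f(x) = max{g₁(x),…,g_m(x)} by replacing each occurrence of the plus function p̂ with a smoothing P(ε,·) satisfying |P(ε,y) - p̂(y)| ≤ κε for all y, then |f̂(ε,x) - f(x)| ≤ (m-1)κε for all x ∈ ℝ and ε > 0. -/
/-!
Replacing one plus function by `P` costs at most `κε`, and since the plus function is
1-Lipschitz the error already present in its argument passes through it without being
amplified. Induction over the `m - 1` nested plus functions adds these errors up.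
-/

/-- Nested plus-function representation of the maximum of a list of functions. -/
noncomputable def nestedMax (x : ℝ) : List (ℝ → ℝ) → ℝ
  | [] => 0
  | [g] => g x
  | g :: g' :: gs => g x + max (nestedMax x (g' :: gs) - g x) 0

/-- Nested smoothing obtained by replacing each plus function by `P`. -/
noncomputable def nestedSmooth (P : ℝ → ℝ) (x : ℝ) : List (ℝ → ℝ) → ℝ
  | [] => 0
  | [g] => g x
  | g :: g' :: gs => g x + P (nestedSmooth P x (g' :: gs) - g x)

section

variable {P : ℝ → ℝ} {δ : ℝ}

lemma abs_sub_max_zero_le_add_abs_sub (hP : ∀ y, |P y - max y 0| ≤ δ) (s m : ℝ) :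
    |P s - max m 0| ≤ δ + |s - m| :=
  calc |P s - max m 0| = |(P s - max s 0) + (max s 0 - max m 0)| := by ring_nf
    _ ≤ |P s - max s 0| + |max s 0 - max m 0| := abs_add_le _ _
    _ ≤ δ + |s - m| := add_le_add (hP s) (abs_max_sub_max_le_abs s m 0)

theorem abs_nestedSmooth_sub_nestedMax_le (hP : ∀ y, |P y - max y 0| ≤ δ) (x : ℝ)
    (g : ℝ → ℝ) (gs : List (ℝ → ℝ)) :
    |nestedSmooth P x (g :: gs) - nestedMax x (g :: gs)| ≤ gs.length * δ := by
  induction gs generalizing g with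
  | nil => simp [nestedSmooth, nestedMax]
  | cons g' gs ih =>
    calc |nestedSmooth P x (g :: g' :: gs) - nestedMax x (g :: g' :: gs)|
        = |P (nestedSmooth P x (g' :: gs) - g x) - max (nestedMax x (g' :: gs) - g x) 0| := by
          simp only [nestedSmooth, nestedMax, add_sub_add_left_eq_sub]
      _ ≤ δ + |nestedSmooth P x (g' :: gs) - nestedMax x (g' :: gs)| := by
          simpa only [sub_sub_sub_cancel_right] using
            abs_sub_max_zero_le_add_abs_sub hP (nestedSmooth P x (g' :: gs) - g x)
              (nestedMax x (g' :: gs) - g x)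
      _ ≤ δ + gs.length * δ := by gcongr; exact ih g'
      _ = (g' :: gs).length * δ := by push_cast [List.length_cons]; ring

end

theorem nestedSmooth_error_bound_general (κ ε : ℝ)
    (P : ℝ → ℝ) (hP : ∀ y : ℝ, |P y - max y 0| ≤ κ * ε)
    (gs : List (ℝ → ℝ)) (hgs : gs ≠ []) (x : ℝ) :
    |nestedSmooth P x gs - nestedMax x gs| ≤ ((gs.length : ℝ) - 1) * κ * ε := by
  obtain ⟨g, gs, rfl⟩ := List.exists_cons_of_ne_nil hgs
  calc |nestedSmooth P x (g :: gs) - nestedMax x (g :: gs)| ≤ gs.length * (κ * ε) :=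
        abs_nestedSmooth_sub_nestedMax_le hP x g gs
    _ = (((g :: gs).length : ℝ) - 1) * κ * ε := by push_cast [List.length_cons]; ring

theorem nestedSmooth_error_bound (κ ε : ℝ) (hκ : 0 < κ) (hε : 0 < ε)
    (P : ℝ → ℝ) (hP : ∀ y : ℝ, |P y - max y 0| ≤ κ * ε)
    (gs : List (ℝ → ℝ)) (hgs : gs ≠ []) (x : ℝ) :
    |nestedSmooth P x gs - nestedMax x gs| ≤ ((gs.length : ℝ) - 1) * κ * ε :=
  nestedSmooth_error_bound_general κ ε P hP gs hgs x
end

section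
/- Let E be a real Hilbert space, C ⊆ E nonempty closed convex, A : E → E* strongly monotone with constant c_A > 0 (i.e., (A(v) - A(w))(v - w) ≥ c_A‖v-w‖² for all v,w), X a Banach space, γ : E → X linear continuous, and J⁰ : X × X → ℝ satisfying the one-sided Lipschitz condition J⁰(y₁; y₂ - y₁) + J⁰(y₂; y₁ - y₂) ≤ c_J‖y₁ - y₂‖²_X for all y₁, y₂ ∈ X, with c_J‖γ‖² < c_A. Then the bifunction φ(v,w) = A(v)(w-v) + J⁰(γv; γw - γv) - λ(w-v) (for a fixed λ ∈ E*) satisfies the strong monotonicity estimate φ(v,w) + φ(w,v) ≤ -(c_A - c_J‖γ‖²)‖v - w‖²_E for all v, w ∈ C. -/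
/-!
Read `φ` as the sum of three bifunctions in (point; direction) form,
`(v; d) ↦ A v d`, `(v; d) ↦ J⁰(γ v; γ d)` and `(v; d) ↦ -λ d`, each satisfying a one-sided
Lipschitz estimate `ψ(v; w - v) + ψ(w; v - w) ≤ c ‖v - w‖²`: with `c = -c_A` by strong
monotonicity of `A`, with `c = c_J ‖γ‖²` since `‖γ v - γ w‖ ≤ ‖γ‖ ‖v - w‖`, and with `c = 0`
by linearity of `λ`; the constants add up.
-/

def OneSidedLipschitz {X : Type*} [SeminormedAddCommGroup X] (J : X → X → ℝ) (c : ℝ) : Prop :=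
  ∀ y₁ y₂ : X, J y₁ (y₂ - y₁) + J y₂ (y₁ - y₂) ≤ c * ‖y₁ - y₂‖ ^ 2

namespace OneSidedLipschitz

variable {E : Type*} [SeminormedAddCommGroup E]

theorem add {J K : E → E → ℝ} {c₁ c₂ : ℝ} (hJ : OneSidedLipschitz J c₁)
    (hK : OneSidedLipschitz K c₂) : OneSidedLipschitz (fun y d => J y d + K y d) (c₁ + c₂) :=
  fun y₁ y₂ => by linarith [hJ y₁ y₂, hK y₁ y₂]

theorem comp_continuousLinearMap [NormedSpace ℝ E] {X : Type*} [SeminormedAddCommGroup X]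
    [NormedSpace ℝ X] {J : X → X → ℝ} {c : ℝ} (hJ : OneSidedLipschitz J c)
    (hc : 0 ≤ c) (γ : E →L[ℝ] X) :
    OneSidedLipschitz (fun v d => J (γ v) (γ d)) (c * ‖γ‖ ^ 2) := fun v w => by
  have hγ : ‖γ v - γ w‖ ^ 2 ≤ ‖γ‖ ^ 2 * ‖v - w‖ ^ 2 := by
    rw [← mul_pow, ← map_sub]
    exact pow_le_pow_left₀ (norm_nonneg _) (γ.le_opNorm _) 2
  calc J (γ v) (γ (w - v)) + J (γ w) (γ (v - w))
      ≤ c * ‖γ v - γ w‖ ^ 2 := by simpa only [map_sub] using hJ (γ v) (γ w)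
    _ ≤ c * ‖γ‖ ^ 2 * ‖v - w‖ ^ 2 := by rw [mul_assoc]; exact mul_le_mul_of_nonneg_left hγ hc

theorem of_stronglyMonotone [NormedSpace ℝ E] {A : E → E →L[ℝ] ℝ} {c : ℝ}
    (hA : ∀ v w : E, c * ‖v - w‖ ^ 2 ≤ (A v - A w) (v - w)) :
    OneSidedLipschitz (fun v d => A v d) (-c) := fun v w => by
  have hsum : A v (w - v) + A w (v - w) = -((A v - A w) (v - w)) := by
    rw [← neg_sub v w, map_neg, sub_apply]
    ring
  linarith [hA v w]

theorem continuousLinearMap [NormedSpace ℝ E] (l : E →L[ℝ] ℝ) :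
    OneSidedLipschitz (fun _ d => l d) 0 :=
  fun v w => by rw [← map_add, sub_add_sub_cancel', sub_self, map_zero, zero_mul]

end OneSidedLipschitz

theorem bifunction_strong_monotonicity_general
    {E : Type*} [NormedAddCommGroup E] [InnerProductSpace ℝ E]
    {X : Type*} [NormedAddCommGroup X] [NormedSpace ℝ X]
    (C : Set E)
    (A : E → (E →L[ℝ] ℝ)) (cA : ℝ)
    (hA : ∀ v w : E, (A v - A w) (v - w) ≥ cA * ‖v - w‖ ^ 2)
    (γ : E →L[ℝ] X)
    (J0 : X → X → ℝ) (cJ : ℝ) (hcJ : 0 ≤ cJ)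
    (hJ : ∀ y₁ y₂ : X, J0 y₁ (y₂ - y₁) + J0 y₂ (y₁ - y₂) ≤ cJ * ‖y₁ - y₂‖ ^ 2)
    (lam : E →L[ℝ] ℝ)
    (φ : E → E → ℝ)
    (hφ : ∀ v w : E, φ v w = A v (w - v) + J0 (γ v) (γ w - γ v) - lam (w - v)) :
    ∀ v ∈ C, ∀ w ∈ C,
      φ v w + φ w v ≤ -(cA - cJ * ‖γ‖ ^ 2) * ‖v - w‖ ^ 2 := by
  intro v _ w _
  have hsum := (((OneSidedLipschitz.of_stronglyMonotone hA).add
    (OneSidedLipschitz.comp_continuousLinearMap hJ hcJ γ)).add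
    (OneSidedLipschitz.continuousLinearMap (-lam))) v w
  rw [hφ, hφ]
  simp only [map_sub, neg_apply] at hsum ⊢
  linarith

theorem bifunction_strong_monotonicity
    {E : Type*} [NormedAddCommGroup E] [InnerProductSpace ℝ E] [CompleteSpace E]
    {X : Type*} [NormedAddCommGroup X] [NormedSpace ℝ X]
    (C : Set E) (hC : C.Nonempty) (hCclosed : IsClosed C) (hCconvex : Convex ℝ C)
    (A : E → (E →L[ℝ] ℝ)) (cA : ℝ) (hcA : 0 < cA)
    (hA : ∀ v w : E, (A v - A w) (v - w) ≥ cA * ‖v - w‖ ^ 2)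
    (γ : E →L[ℝ] X)
    (J0 : X → X → ℝ) (cJ : ℝ) (hcJ : 0 ≤ cJ)
    (hJ : ∀ y₁ y₂ : X, J0 y₁ (y₂ - y₁) + J0 y₂ (y₁ - y₂) ≤ cJ * ‖y₁ - y₂‖ ^ 2)
    (hsmall : cJ * ‖γ‖ ^ 2 < cA)
    (lam : E →L[ℝ] ℝ)
    (φ : E → E → ℝ)
    (hφ : ∀ v w : E, φ v w = A v (w - v) + J0 (γ v) (γ w - γ v) - lam (w - v)) :
    ∀ v ∈ C, ∀ w ∈ C,
      φ v w + φ w v ≤ -(cA - cJ * ‖γ‖ ^ 2) * ‖v - w‖ ^ 2 :=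
  bifunction_strong_monotonicity_general C A cA hA γ J0 cJ hcJ hJ lam φ hφ
end

section
/- Let b : ℝ → ℝ be piecewise Lipschitz with common Lipschitz constant α₀ on each piece, having finitely many jump discontinuities t₁ᴶ < … < t_kᴶ in an interval, with all jumps non-negative (left limit ≤ right limit at each jump point). Then for all t₂ < t₁ it holds that b(t₁) - b(t₂) ≥ -α₀(t₁ - t₂), i.e., the difference quotient (b(t₁) - b(t₂))/(t₁ - t₂) ≥ -α₀. -/
/-!
The claim says that `g t = b t + α₀ t` is monotone. On a jump-free interval the Lipschitz bound
makes `g` non-decreasing, and at a jump point `s` the bounds `bl s ≤ b s ≤ br s` pass to the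
one-sided limits of `g`. So every point `x` has a left neighbourhood where `g ≤ g x` and a right
neighbourhood where `g x ≤ g`, and a supremum argument turns this local monotonicity into global
monotonicity.
-/

open Filter Set Topology

theorem monotone_of_forall_eventually_nhdsLT_nhdsGT {α β : Type*}
    [ConditionallyCompleteLinearOrder α] [TopologicalSpace α] [OrderTopology α]
    [DenselyOrdered α] [Preorder β] {f : α → β}
    (hlt : ∀ x, ∀ᶠ y in 𝓝[<] x, f y ≤ f x) (hgt : ∀ x, ∀ᶠ y in 𝓝[>] x, f x ≤ f y) :
    Monotone f := by
  intro a b hab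
  set S := {x ∈ Icc a b | f a ≤ f x}
  have haS : a ∈ S := ⟨⟨le_rfl, hab⟩, le_rfl⟩
  have hbdd : BddAbove S := ⟨b, fun x hx => hx.1.2⟩
  have hlub : IsLUB S (sSup S) := isLUB_csSup ⟨a, haS⟩ hbdd
  set c := sSup S
  have hcb : c ≤ b := csSup_le ⟨a, haS⟩ fun x hx => hx.1.2
  have hle_c : ∀ᶠ y in 𝓝[≤] c, f y ≤ f c := by
    rw [← Iio_insert, nhdsWithin_insert, eventually_sup, eventually_pure]
    exact ⟨le_rfl, hlt c⟩
  obtain ⟨x, hxS, hxc⟩ := (hlub.frequently_mem ⟨a, haS⟩).and_eventually hle_c |>.exists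
  have hac : f a ≤ f c := hxS.2.trans hxc
  obtain hc_lt | hc_eq := hcb.lt_or_eq
  · have := nhdsGT_neBot_of_exists_gt ⟨b, hc_lt⟩
    obtain ⟨y, hcy, hy⟩ := ((hgt c).and (Ioo_mem_nhdsGT hc_lt)).exists
    have hyS : y ∈ S := ⟨⟨(le_csSup hbdd haS).trans hy.1.le, hy.2.le⟩, hac.trans hcy⟩
    exact absurd (hlub.1 hyS) (not_le.2 hy.1)
  · exact hc_eq ▸ hac

theorem Finset.eventually_forall_notMem_Ioc {α : Type*} [LinearOrder α] [TopologicalSpace α]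
    [OrderClosedTopology α] (J : Finset α) (x : α) :
    ∀ᶠ y in 𝓝[>] x, ∀ s ∈ J, s ∉ Set.Ioc x y := by
  refine (eventually_all_finset J).2 fun s _ => ?_
  obtain hsx | hxs := le_or_gt s x
  · exact .of_forall fun y hs => (hs.1.trans_le hsx).false
  · filter_upwards [nhdsWithin_le_nhds (eventually_lt_nhds hxs)] with y hy hs
    exact (hs.2.trans_lt hy).false

theorem Finset.eventually_forall_notMem_Ico {α : Type*} [LinearOrder α] [TopologicalSpace α]
    [OrderClosedTopology α] (J : Finset α) (x : α) :
    ∀ᶠ y in 𝓝[<] x, ∀ s ∈ J, s ∉ Set.Ico y x := by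
  refine (eventually_all_finset J).2 fun s _ => ?_
  obtain hxs | hsx := le_or_gt x s
  · exact .of_forall fun y hs => (hs.2.trans_le hxs).false
  · filter_upwards [nhdsWithin_le_nhds (eventually_gt_nhds hsx)] with y hy hs
    exact (hy.trans_le hs.1).false

section PiecewiseLipschitz

variable {b : ℝ → ℝ} {α₀ : ℝ} {J : Finset ℝ}

theorem add_mul_le_add_mul_of_forall_notMem_Icc
    (hlip : ∀ u v : ℝ, (∀ s ∈ J, s ∉ Icc (min u v) (max u v)) → |b u - b v| ≤ α₀ * |u - v|)
    {u v : ℝ} (huv : u ≤ v) (hJ : ∀ s ∈ J, s ∉ Icc u v) :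
    b u + α₀ * u ≤ b v + α₀ * v := by
  have h := hlip u v (by rwa [min_eq_left huv, max_eq_right huv])
  rw [abs_sub_comm u v, abs_of_nonneg (sub_nonneg.2 huv)] at h
  linarith [le_abs_self (b u - b v)]

theorem eventually_add_mul_le_nhdsGT
    (hlip : ∀ u v : ℝ, (∀ s ∈ J, s ∉ Icc (min u v) (max u v)) → |b u - b v| ≤ α₀ * |u - v|)
    {br : ℝ → ℝ} (hright : ∀ s ∈ J, Tendsto b (𝓝[>] s) (𝓝 (br s)))
    (hval : ∀ s ∈ J, b s ≤ br s) (x : ℝ) :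
    ∀ᶠ y in 𝓝[>] x, b x + α₀ * x ≤ b y + α₀ * y := by
  filter_upwards [J.eventually_forall_notMem_Ioc x, self_mem_nhdsWithin] with y hJ (hxy : x < y)
  by_cases hx : x ∈ J
  · have hlim : Tendsto (fun z => b z + α₀ * z) (𝓝[>] x) (𝓝 (br x + α₀ * x)) :=
      (hright x hx).add (((continuous_const_mul α₀).tendsto x).mono_left nhdsWithin_le_nhds)
    have hle : br x + α₀ * x ≤ b y + α₀ * y := by
      refine le_of_tendsto hlim ?_
      filter_upwards [Ioo_mem_nhdsGT hxy] with z hz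
      exact add_mul_le_add_mul_of_forall_notMem_Icc hlip hz.2.le
        fun s hs hsz => hJ s hs ⟨hz.1.trans_le hsz.1, hsz.2⟩
    linarith [hval x hx]
  · refine add_mul_le_add_mul_of_forall_notMem_Icc hlip hxy.le fun s hs hsI => ?_
    obtain rfl | hxs := hsI.1.eq_or_lt
    · exact hx hs
    · exact hJ s hs ⟨hxs, hsI.2⟩

theorem eventually_add_mul_le_nhdsLT
    (hlip : ∀ u v : ℝ, (∀ s ∈ J, s ∉ Icc (min u v) (max u v)) → |b u - b v| ≤ α₀ * |u - v|)
    {bl : ℝ → ℝ} (hleft : ∀ s ∈ J, Tendsto b (𝓝[<] s) (𝓝 (bl s)))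
    (hval : ∀ s ∈ J, bl s ≤ b s) (x : ℝ) :
    ∀ᶠ y in 𝓝[<] x, b y + α₀ * y ≤ b x + α₀ * x := by
  filter_upwards [J.eventually_forall_notMem_Ico x, self_mem_nhdsWithin] with y hJ (hyx : y < x)
  by_cases hx : x ∈ J
  · have hlim : Tendsto (fun z => b z + α₀ * z) (𝓝[<] x) (𝓝 (bl x + α₀ * x)) :=
      (hleft x hx).add (((continuous_const_mul α₀).tendsto x).mono_left nhdsWithin_le_nhds)
    have hle : b y + α₀ * y ≤ bl x + α₀ * x := by
      refine ge_of_tendsto hlim ?_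
      filter_upwards [Ioo_mem_nhdsLT hyx] with z hz
      exact add_mul_le_add_mul_of_forall_notMem_Icc hlip hz.1.le
        fun s hs hsz => hJ s hs ⟨hsz.1, hsz.2.trans_lt hz.2⟩
    linarith [hval x hx]
  · refine add_mul_le_add_mul_of_forall_notMem_Icc hlip hyx.le fun s hs hsI => ?_
    obtain rfl | hsx := hsI.2.eq_or_lt
    · exact hx hs
    · exact hJ s hs ⟨hsI.1, hsx⟩

end PiecewiseLipschitz

theorem piecewise_lipschitz_nonneg_jumps_difference_quotient_general
    (b : ℝ → ℝ) (α₀ : ℝ)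
    (J : Finset ℝ)  -- the finitely many jump points
    (bl br : ℝ → ℝ)  -- one-sided limits at the jump points
    (hleft : ∀ s ∈ J, Tendsto b (nhdsWithin s (Set.Iio s)) (nhds (bl s)))
    (hright : ∀ s ∈ J, Tendsto b (nhdsWithin s (Set.Ioi s)) (nhds (br s)))
    (hval : ∀ s ∈ J, bl s ≤ b s ∧ b s ≤ br s)
    -- `b` is `α₀`-Lipschitz on every interval containing no jump point:
    (hlip : ∀ u v : ℝ, (∀ s ∈ J, s ∉ Set.Icc (min u v) (max u v)) →
      |b u - b v| ≤ α₀ * |u - v|) :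
    ∀ t₂ t₁ : ℝ, t₂ < t₁ → b t₁ - b t₂ ≥ -α₀ * (t₁ - t₂) := by
  intro t₂ t₁ h
  have hmono : Monotone fun t => b t + α₀ * t :=
    monotone_of_forall_eventually_nhdsLT_nhdsGT
      (eventually_add_mul_le_nhdsLT hlip hleft fun s hs => (hval s hs).1)
      (eventually_add_mul_le_nhdsGT hlip hright fun s hs => (hval s hs).2)
  linarith [hmono h.le]

theorem piecewise_lipschitz_nonneg_jumps_difference_quotient
    (b : ℝ → ℝ) (α₀ : ℝ) (hα₀ : 0 ≤ α₀)
    (J : Finset ℝ)  -- the finitely many jump points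
    (bl br : ℝ → ℝ)  -- one-sided limits at the jump points
    (hleft : ∀ s ∈ J, Tendsto b (nhdsWithin s (Set.Iio s)) (nhds (bl s)))
    (hright : ∀ s ∈ J, Tendsto b (nhdsWithin s (Set.Ioi s)) (nhds (br s)))
    (hjump : ∀ s ∈ J, bl s ≤ br s)  -- all jumps are non-negative
    (hval : ∀ s ∈ J, bl s ≤ b s ∧ b s ≤ br s)
    -- `b` is `α₀`-Lipschitz on every interval containing no jump point:
    (hlip : ∀ u v : ℝ, (∀ s ∈ J, s ∉ Set.Icc (min u v) (max u v)) →
      |b u - b v| ≤ α₀ * |u - v|) :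
    ∀ t₂ t₁ : ℝ, t₂ < t₁ → b t₁ - b t₂ ≥ -α₀ * (t₁ - t₂) :=
  piecewise_lipschitz_nonneg_jumps_difference_quotient_general b α₀ J bl br hleft hright hval hlip
end

section
/- Let E, X be real normed spaces, γ : E → X linear continuous, A : E → E* strongly monotone with constant c_A > 0, and J⁰ satisfy J⁰(y₁; y₂-y₁) + J⁰(y₂; y₁-y₂) ≤ c_J‖y₁-y₂‖²_X with c_J‖γ‖²_{E→X} < c_A. If û, ŵ ∈ C (C ⊆ E convex) both satisfy the hemivariational inequality A(v̂)(v - v̂) + J⁰(γv̂; γv - γv̂) ≥ λ(v - v̂) for all v ∈ C (with v̂ = û resp. ŵ), then û = ŵ. -/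
/-!
Testing the inequality for `u` at `v = w` and for `w` at `v = u` and adding cancels the load
`lam`, so strong monotonicity of `A` and the one-sided bound on `J0` give
`cA * ‖u - w‖ ^ 2 ≤ cJ * ‖γ‖ ^ 2 * ‖u - w‖ ^ 2`, which forces `u = w` since `cJ * ‖γ‖ ^ 2 < cA`.
-/

lemma sub_apply_sub_le_of_add_ge {E : Type*} [AddCommGroup E] [Module ℝ E]
    {f g lam : E →ₗ[ℝ] ℝ} {u w : E} {a b : ℝ}
    (hu : f (w - u) + a ≥ lam (w - u)) (hw : g (u - w) + b ≥ lam (u - w)) :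
    (f - g) (u - w) ≤ a + b := by
  have hf : f (w - u) = -f (u - w) := by rw [← map_neg, neg_sub]
  have hlam : lam (w - u) = -lam (u - w) := by rw [← map_neg, neg_sub]
  rw [LinearMap.sub_apply]
  linarith

lemma ContinuousLinearMap.norm_apply_sq_le {E X : Type*}
    [SeminormedAddCommGroup E] [NormedSpace ℝ E] [SeminormedAddCommGroup X] [NormedSpace ℝ X]
    (f : E →L[ℝ] X) (x : E) : ‖f x‖ ^ 2 ≤ ‖f‖ ^ 2 * ‖x‖ ^ 2 := by
  rw [← mul_pow]
  exact pow_le_pow_left₀ (norm_nonneg _) (f.le_opNorm x) 2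

lemma eq_of_mul_norm_sub_sq_le {E : Type*} [NormedAddCommGroup E] {u w : E} {a b : ℝ}
    (hab : b < a) (h : a * ‖u - w‖ ^ 2 ≤ b * ‖u - w‖ ^ 2) : u = w := by
  by_contra hne
  have hpos : 0 < ‖u - w‖ ^ 2 := by
    have : u - w ≠ 0 := sub_ne_zero.mpr hne
    positivity
  exact hab.not_ge (le_of_mul_le_mul_right h hpos)

theorem hemivariational_inequality_uniqueness_general
    {E : Type*} [NormedAddCommGroup E] [NormedSpace ℝ E]
    {X : Type*} [NormedAddCommGroup X] [NormedSpace ℝ X]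
    (γ : E →L[ℝ] X)
    (A : E → (E →L[ℝ] ℝ)) (cA : ℝ)
    (hA : ∀ v w : E, (A v - A w) (v - w) ≥ cA * ‖v - w‖ ^ 2)
    (J0 : X → X → ℝ) (cJ : ℝ) (hcJ : 0 ≤ cJ)
    (hJ : ∀ y₁ y₂ : X, J0 y₁ (y₂ - y₁) + J0 y₂ (y₁ - y₂) ≤ cJ * ‖y₁ - y₂‖ ^ 2)
    (hsmall : cJ * ‖γ‖ ^ 2 < cA)
    (lam : E →L[ℝ] ℝ)
    (C : Set E)
    (u w : E) (hu : u ∈ C) (hw : w ∈ C)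
    (hHVIu : ∀ v ∈ C, A u (v - u) + J0 (γ u) (γ v - γ u) ≥ lam (v - u))
    (hHVIw : ∀ v ∈ C, A w (v - w) + J0 (γ w) (γ v - γ w) ≥ lam (v - w)) :
    u = w := by
  refine eq_of_mul_norm_sub_sq_le hsmall ?_
  calc cA * ‖u - w‖ ^ 2 ≤ (A u - A w) (u - w) := hA u w
    _ ≤ J0 (γ u) (γ w - γ u) + J0 (γ w) (γ u - γ w) :=
        sub_apply_sub_le_of_add_ge (f := (A u : E →ₗ[ℝ] ℝ)) (g := A w) (lam := lam)
          (hHVIu w hw) (hHVIw u hu)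
    _ ≤ cJ * ‖γ (u - w)‖ ^ 2 := by rw [map_sub]; exact hJ _ _
    _ ≤ cJ * (‖γ‖ ^ 2 * ‖u - w‖ ^ 2) := by gcongr; exact γ.norm_apply_sq_le _
    _ = cJ * ‖γ‖ ^ 2 * ‖u - w‖ ^ 2 := by ring

theorem hemivariational_inequality_uniqueness
    {E : Type*} [NormedAddCommGroup E] [NormedSpace ℝ E]
    {X : Type*} [NormedAddCommGroup X] [NormedSpace ℝ X]
    (γ : E →L[ℝ] X)
    (A : E → (E →L[ℝ] ℝ)) (cA : ℝ) (hcA : 0 < cA)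
    (hA : ∀ v w : E, (A v - A w) (v - w) ≥ cA * ‖v - w‖ ^ 2)
    (J0 : X → X → ℝ) (cJ : ℝ) (hcJ : 0 ≤ cJ)
    (hJ : ∀ y₁ y₂ : X, J0 y₁ (y₂ - y₁) + J0 y₂ (y₁ - y₂) ≤ cJ * ‖y₁ - y₂‖ ^ 2)
    (hsmall : cJ * ‖γ‖ ^ 2 < cA)
    (lam : E →L[ℝ] ℝ)
    (C : Set E) (hCconvex : Convex ℝ C)
    (u w : E) (hu : u ∈ C) (hw : w ∈ C)
    (hHVIu : ∀ v ∈ C, A u (v - u) + J0 (γ u) (γ v - γ u) ≥ lam (v - u))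
    (hHVIw : ∀ v ∈ C, A w (v - w) + J0 (γ w) (γ v - γ w) ≥ lam (v - w)) :
    u = w :=
  hemivariational_inequality_uniqueness_general γ A cA hA J0 cJ hcJ hJ hsmall lam C u w hu hw hHVIu
    hHVIw
end
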